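/- arXiv:1102.3950 — 2 statements merged into one kernel-verified Lean document; each statement's English description precedes it below -/
import Mathlib

section
/- Let U, V, W be finite-dimensional complex inner product spaces, let D : U → V be a linear map, and let ρ : V × U* → W be a bilinear map, where U* carries the dual norm. Then ‖Tr_ρ D‖_W ≤ √(rank D) · ‖ρ‖ · ‖D‖, where Tr_ρ D = Σ_i ρ(D u_i, u^i) for an orthonormal basis {u_i} of U with dual basis {u^i}, ‖ρ‖ = sup{ ‖ρ(v, α)‖_W : v ∈ V, α ∈ U*, ‖v‖ = 1, ‖α‖ = 1 }, and ‖D‖ = (Σ_i ‖D u_i‖²_V)^{1/2} is the Hilbert–Schmidt norm of D. -/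
/-!
Let `f` be an orthonormal basis of `range D`, so `n := rank D` vectors. Expanding each `D uᵢ` in
`f` turns the trace into `∑ⱼ ρ (fⱼ, φⱼ)` with `φⱼ = ∑ᵢ ⟪fⱼ, D uᵢ⟫ uⁱ`, and
`‖φⱼ‖² = ∑ᵢ |⟪fⱼ, D uᵢ⟫|²` since the norm of a functional is the `ℓ²` norm of its values on an
orthonormal basis. Hence `‖Tr_ρ D‖ ≤ ‖ρ‖ ∑ⱼ ‖φⱼ‖`, and Cauchy–Schwarz over the `n` indices `j`
together with Parseval in `range D` gives `∑ⱼ ‖φⱼ‖ ≤ √n ‖D‖`.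
-/

open scoped InnerProductSpace

theorem Real.sum_sqrt_le_sqrt_card_mul_sqrt_sum {ι : Type*} (s : Finset ι) {f : ι → ℝ}
    (hf : ∀ i, 0 ≤ f i) : ∑ i ∈ s, √(f i) ≤ √s.card * √(∑ i ∈ s, f i) := by
  simpa [mul_comm] using Real.sum_sqrt_mul_sqrt_le s hf (g := fun _ ↦ 1) fun _ ↦ zero_le_one

namespace OrthonormalBasis

variable {𝕜 E : Type*} [RCLike 𝕜] [NormedAddCommGroup E] [InnerProductSpace 𝕜 E]
  {ι : Type*} [Fintype ι]

theorem sum_sq_norm_apply [CompleteSpace E] (b : OrthonormalBasis ι 𝕜 E) (φ : StrongDual 𝕜 E) :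
    ∑ i, ‖φ (b i)‖ ^ 2 = ‖φ‖ ^ 2 := by
  simpa using b.sum_sq_norm_inner_left ((InnerProductSpace.toDual 𝕜 E).symm φ)

theorem norm_sum_smul_toDual [CompleteSpace E] (b : OrthonormalBasis ι 𝕜 E) (c : ι → 𝕜) :
    ‖∑ i, c i • InnerProductSpace.toDual 𝕜 E (b i)‖ = √(∑ i, ‖c i‖ ^ 2) := by
  rw [← Real.sqrt_sq (norm_nonneg _), ← b.sum_sq_norm_apply]
  congr! with k
  classical
  simp [b.inner_eq_ite]

variable {K : Submodule 𝕜 E} {κ : Type*} [Fintype κ]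

theorem sum_sq_norm_inner_coe_of_mem (f : OrthonormalBasis κ 𝕜 K) {x : E} (hx : x ∈ K) :
    ∑ j, ‖⟪(f j : E), x⟫_𝕜‖ ^ 2 = ‖x‖ ^ 2 :=
  f.sum_sq_norm_inner_right ⟨x, hx⟩

theorem sum_inner_smul_coe_of_mem (f : OrthonormalBasis κ 𝕜 K) {x : E} (hx : x ∈ K) :
    ∑ j, ⟪(f j : E), x⟫_𝕜 • (f j : E) = x := by
  simpa using congrArg Subtype.val (f.sum_repr' ⟨x, hx⟩)

theorem sum_apply_apply_eq_of_mem {F G : Type*} [NormedAddCommGroup F] [NormedSpace 𝕜 F]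
    [NormedAddCommGroup G] [NormedSpace 𝕜 G] (f : OrthonormalBasis κ 𝕜 K)
    (ρ : E →L[𝕜] F →L[𝕜] G) {x : ι → E} (hx : ∀ i, x i ∈ K) (y : ι → F) :
    ∑ i, ρ (x i) (y i) = ∑ j, ρ (f j) (∑ i, ⟪(f j : E), x i⟫_𝕜 • y i) := by
  conv_lhs => rw [funext fun i ↦ (f.sum_inner_smul_coe_of_mem (hx i)).symm]
  simp only [map_sum, map_smul, sum_apply, smul_apply]
  exact Finset.sum_comm

end OrthonormalBasis

theorem trace_norm_le_sqrt_rank_mul_norm_mul_hs_norm_general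
    {U V W : Type*}
    [NormedAddCommGroup U] [InnerProductSpace ℂ U] [FiniteDimensional ℂ U]
    [NormedAddCommGroup V] [InnerProductSpace ℂ V]
    [NormedAddCommGroup W] [InnerProductSpace ℂ W]
    (D : U →ₗ[ℂ] V)
    (ρ : V →L[ℂ] StrongDual ℂ U →L[ℂ] W)
    {ι : Type*} [Fintype ι] (b : OrthonormalBasis ι ℂ U) :
    ‖∑ i, ρ (D (b i)) (InnerProductSpace.toDual ℂ U (b i))‖ ≤
      Real.sqrt (Module.finrank ℂ (LinearMap.range D)) *
        @Norm.norm _ (ContinuousLinearMap.hasOpNorm (E := V)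
          (F := StrongDual ℂ U →L[ℂ] W) (σ₁₂ := RingHom.id ℂ)) ρ *
        Real.sqrt (∑ i, ‖D (b i)‖ ^ 2) := by
  -- instance search does not find the operator norm on `StrongDual ℂ U →L[ℂ] W` by itself
  let : NormedAddCommGroup (StrongDual ℂ U →L[ℂ] W) := ContinuousLinearMap.toNormedAddCommGroup
  let : NormedSpace ℂ (StrongDual ℂ U →L[ℂ] W) := ContinuousLinearMap.toNormedSpace
  let f := stdOrthonormalBasis ℂ (LinearMap.range D)
  have hD : ∀ i, D (b i) ∈ LinearMap.range D := fun i ↦ LinearMap.mem_range_self D (b i)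
  set c : Fin _ → ι → ℝ := fun j i ↦ ‖⟪(f j : V), D (b i)⟫_ℂ‖ ^ 2
  calc ‖∑ i, ρ (D (b i)) (InnerProductSpace.toDual ℂ U (b i))‖
      = ‖∑ j, ρ (f j) (∑ i, ⟪(f j : V), D (b i)⟫_ℂ • InnerProductSpace.toDual ℂ U (b i))‖ := by
        rw [f.sum_apply_apply_eq_of_mem ρ hD]
    _ ≤ ∑ j, ‖ρ‖ * √(∑ i, c j i) := by
        refine norm_sum_le_of_le _ fun j _ ↦ (ρ.le_opNorm₂ _ _).trans_eq ?_
        have hf : ‖(f j : V)‖ = 1 := f.norm_eq_one j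
        rw [hf, mul_one, b.norm_sum_smul_toDual]
    _ = ‖ρ‖ * ∑ j, √(∑ i, c j i) := (Finset.mul_sum ..).symm
    _ ≤ ‖ρ‖ * (√(Module.finrank ℂ (LinearMap.range D)) * √(∑ j, ∑ i, c j i)) := by
        gcongr
        simpa using Real.sum_sqrt_le_sqrt_card_mul_sqrt_sum Finset.univ
          fun j ↦ Finset.sum_nonneg fun i _ ↦ sq_nonneg ‖⟪(f j : V), D (b i)⟫_ℂ‖
    _ = _ := by
        rw [Finset.sum_comm]
        simp only [c, f.sum_sq_norm_inner_coe_of_mem (hD _)]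
        ring

/-- Let `U, V, W` be finite-dimensional complex inner product spaces,
`D : U → V` a linear map, and `ρ : V × U* → W` a (continuous) bilinear map, where `U*`
carries the dual norm.  Then `‖Tr_ρ D‖ ≤ √(rank D) * ‖ρ‖ * ‖D‖`, where
`Tr_ρ D = ∑ i, ρ (D uᵢ) uⁱ` for an orthonormal basis `{uᵢ}` of `U` with dual basis
`{uⁱ}` (for an orthonormal basis the dual basis is `uⁱ = ⟪uᵢ, ·⟫`, i.e.
`InnerProductSpace.toDual ℂ U (b i)`), `‖ρ‖` is the operator (sup) norm of the bilinear
map and `‖D‖ = (∑ i, ‖D uᵢ‖²)^{1/2}` is the Hilbert–Schmidt norm of `D`. -/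
theorem trace_norm_le_sqrt_rank_mul_norm_mul_hs_norm
    {U V W : Type*}
    [NormedAddCommGroup U] [InnerProductSpace ℂ U] [FiniteDimensional ℂ U]
    [NormedAddCommGroup V] [InnerProductSpace ℂ V] [FiniteDimensional ℂ V]
    [NormedAddCommGroup W] [InnerProductSpace ℂ W] [FiniteDimensional ℂ W]
    (D : U →ₗ[ℂ] V)
    (ρ : V →L[ℂ] StrongDual ℂ U →L[ℂ] W)
    {ι : Type*} [Fintype ι] (b : OrthonormalBasis ι ℂ U) :
    ‖∑ i, ρ (D (b i)) (InnerProductSpace.toDual ℂ U (b i))‖ ≤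
      Real.sqrt (Module.finrank ℂ (LinearMap.range D)) *
        @Norm.norm _ (ContinuousLinearMap.hasOpNorm (E := V)
          (F := StrongDual ℂ U →L[ℂ] W) (σ₁₂ := RingHom.id ℂ)) ρ *
        Real.sqrt (∑ i, ‖D (b i)‖ ^ 2) :=
  trace_norm_le_sqrt_rank_mul_norm_mul_hs_norm_general D ρ b
end

section
/- Let H, H₀, H₁, H₂ be complex Hilbert spaces, let T : H₀ → H be a bounded linear operator, and let T₁ : H₀ ⇀ H₁ and T₂ : H₁ ⇀ H₂ be closed, densely defined linear operators such that T₁ maps its domain into the domain of T₂ and T₂(T₁ u) = 0 for every u ∈ Dom T₁. Let F ⊆ H be a closed subspace with T(Ker T₁) ⊆ F, let f ∈ F and C > 0. Then the following are equivalent: (1) there exists u ∈ Ker T₁ with T u = f and ‖u‖_{H₀} ≤ C; (2) for every g ∈ F and every v ∈ Dom(T₁*) ∩ Dom(T₂), one has |⟨g, f⟩_H|² ≤ C² (‖T* g + T₁* v‖²_{H₀} + ‖T₂ v‖²_{H₂}). -/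
/-!
Necessity is Cauchy–Schwarz, since `⟪g, T u⟫ = ⟪T* g + T₁* v, u⟫` for `u ∈ Ker T₁`.

For sufficiency let `P` be the orthogonal projection onto the closed subspace `Ker T₁`. As `T₁` is
closed, `(Ker T₁)ᗮ` is the closure of `Ran T₁*`; and `T₁* v` is unchanged when `v` is replaced by
its projection onto `Ker T₂ ⊇ Ran T₁`, which kills the `T₂ v` term. So the hypothesis yields
`|⟪g, f⟫| ≤ C ‖P T* g‖` for `g ∈ F`, i.e. `P T* g ↦ ⟪f, g⟫` is a well-defined functional of norm at
most `C`. By Hahn–Banach and Riesz it is `⟪u, ·⟫` for some `u ∈ Ker T₁` with `‖u‖ ≤ C`, and then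
`T u - f` lies in `F` and is orthogonal to `F`.
-/

open scoped InnerProductSpace LinearPMap

section Duality

variable {𝕜 E M : Type*} [RCLike 𝕜] [NormedAddCommGroup E] [InnerProductSpace 𝕜 E]

theorem Submodule.le_mul_norm_starProjection_of_forall_le {K R : Submodule 𝕜 E}
    [K.HasOrthogonalProjection] (hKR : Kᗮ ≤ R.topologicalClosure) {x : E} {c C : ℝ}
    (h : ∀ s ∈ R, c ≤ C * ‖x + s‖) : c ≤ C * ‖K.starProjection x‖ := by
  have hmem : K.starProjection x - x ∈ closure (R : Set E) :=
    hKR (by simpa using Kᗮ.neg_mem (K.sub_starProjection_mem_orthogonal x))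
  have hclosed : IsClosed {s | c ≤ C * ‖x + s‖} := isClosed_le continuous_const (by fun_prop)
  have : K.starProjection x - x ∈ {s | c ≤ C * ‖x + s‖} := closure_minimal h hclosed hmem
  simpa using this

theorem exists_dual_norm_le_comp_eq {F : Type*} [NormedAddCommGroup F] [NormedSpace 𝕜 F]
    [AddCommGroup M] [Module 𝕜 M] (B : M →ₗ[𝕜] F) (ℓ : M →ₗ[𝕜] 𝕜) {C : ℝ} (hC : 0 ≤ C)
    (h : ∀ g, ‖ℓ g‖ ≤ C * ‖B g‖) : ∃ ψ : StrongDual 𝕜 F, ‖ψ‖ ≤ C ∧ ∀ g, ψ (B g) = ℓ g := by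
  have hker : LinearMap.ker B ≤ LinearMap.ker ℓ := fun g hg => by
    simpa [LinearMap.mem_ker.1 hg] using h g
  let φ : LinearMap.range B →ₗ[𝕜] 𝕜 :=
    (LinearMap.ker B).liftQ ℓ hker ∘ₗ B.quotKerEquivRange.symm.toLinearMap
  have hφ : ∀ g, φ ⟨B g, LinearMap.mem_range_self B g⟩ = ℓ g := fun g => by
    simp [φ, LinearMap.quotKerEquivRange_symm_apply_image]
  have hφC : ∀ y, ‖φ y‖ ≤ C * ‖y‖ := by
    rintro ⟨_, g, rfl⟩
    exact (hφ g).symm ▸ h g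
  obtain ⟨ψ, hψ, hψnorm⟩ := exists_extension_norm_eq _ (φ.mkContinuous C hφC)
  refine ⟨ψ, hψnorm ▸ φ.mkContinuous_norm_le hC hφC, fun g => ?_⟩
  rw [← hφ g]
  exact hψ ⟨B g, LinearMap.mem_range_self B g⟩

theorem Submodule.exists_mem_norm_le_inner_eq [CompleteSpace E] [AddCommGroup M] [Module 𝕜 M]
    (K : Submodule 𝕜 E) [K.HasOrthogonalProjection] (A : M →ₗ[𝕜] E) (ℓ : M →ₗ[𝕜] 𝕜) {C : ℝ}
    (hC : 0 ≤ C) (h : ∀ g, ‖ℓ g‖ ≤ C * ‖K.starProjection (A g)‖) :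
    ∃ u ∈ K, ‖u‖ ≤ C ∧ ∀ g, ⟪u, A g⟫_𝕜 = ℓ g := by
  obtain ⟨ψ, hψ, hψA⟩ := exists_dual_norm_le_comp_eq (K.starProjection.toLinearMap ∘ₗ A) ℓ hC h
  set u := (InnerProductSpace.toDual 𝕜 E).symm ψ
  refine ⟨K.starProjection u, K.starProjection_apply_mem u, ?_, fun g => ?_⟩
  · calc ‖K.starProjection u‖ ≤ ‖u‖ := K.norm_starProjection_apply_le u
      _ = ‖ψ‖ := LinearIsometryEquiv.norm_map _ _
      _ ≤ C := hψ
  · rw [K.inner_starProjection_left_eq_right, InnerProductSpace.toDual_symm_apply]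
    exact hψA g

theorem Submodule.eq_of_forall_inner_eq {K : Submodule 𝕜 E} {x y : E} (hx : x ∈ K) (hy : y ∈ K)
    (h : ∀ g ∈ K, ⟪x, g⟫_𝕜 = ⟪y, g⟫_𝕜) : x = y := by
  have := h _ (K.sub_mem hx hy)
  rwa [← sub_eq_zero, ← inner_sub_left, inner_self_eq_zero, sub_eq_zero] at this

end Duality

namespace LinearPMap

section Kernel

variable {R E F : Type*} [CommRing R] [AddCommGroup E] [Module R E] [AddCommGroup F] [Module R F]

def ker (T : E →ₗ.[R] F) : Submodule R E :=
  T.graph.comap (LinearMap.inl R E F)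

theorem mem_ker_iff {T : E →ₗ.[R] F} {x : E} :
    x ∈ T.ker ↔ ∃ hx : x ∈ T.domain, T ⟨x, hx⟩ = 0 := by
  simp [ker, mem_graph_iff]

theorem isClosed_ker [TopologicalSpace E] [TopologicalSpace F] {T : E →ₗ.[R] F}
    (hT : T.IsClosed) : _root_.IsClosed (T.ker : Set E) :=
  hT.preimage (continuous_id.prodMk continuous_const)

end Kernel

variable {𝕜 E F : Type*} [RCLike 𝕜] [NormedAddCommGroup E] [InnerProductSpace 𝕜 E]
  [NormedAddCommGroup F] [InnerProductSpace 𝕜 F] [CompleteSpace E] {T : E →ₗ.[𝕜] F}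

theorem exists_adjoint_eq_zero_of_forall_inner_eq_zero (hT : Dense (T.domain : Set E)) {w : F}
    (hw : ∀ x : T.domain, ⟪w, T x⟫_𝕜 = 0) : ∃ hw' : w ∈ T†.domain, T† ⟨w, hw'⟩ = 0 := by
  have hx₀ : ∀ x : T.domain, ⟪(0 : E), x⟫_𝕜 = ⟪w, T x⟫_𝕜 := by simp [hw]
  exact ⟨mem_adjoint_domain_of_exists w ⟨0, hx₀⟩, adjoint_apply_eq hT _ hx₀⟩

theorem exists_adjoint_starProjection_eq (hT : Dense (T.domain : Set E))
    (N : Submodule 𝕜 F) [N.HasOrthogonalProjection] (hN : ∀ x : T.domain, T x ∈ N)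
    (v : T†.domain) :
    ∃ h : N.starProjection v ∈ T†.domain, T† ⟨N.starProjection v, h⟩ = T† v := by
  obtain ⟨hw, hTw⟩ := exists_adjoint_eq_zero_of_forall_inner_eq_zero hT
    fun x => Submodule.inner_left_of_mem_orthogonal (hN x) (N.sub_starProjection_mem_orthogonal v)
  have hmem : N.starProjection v ∈ T†.domain := by
    simpa using T†.domain.sub_mem v.2 hw
  refine ⟨hmem, ?_⟩
  have hsub : (⟨N.starProjection v, hmem⟩ : T†.domain) = v - ⟨_, hw⟩ := Subtype.ext (by simp)
  rw [hsub, map_sub, hTw, sub_zero]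

/- Von Neumann's `T†† = T`: the orthogonal complement of the graph in `E ⊕₂ F` is the rotated
graph of `T†`, and a closed graph is its own double orthogonal complement. -/
theorem mem_graph_of_forall_inner_adjoint [CompleteSpace F] (hT : Dense (T.domain : Set E))
    (hTc : T.IsClosed) {x : E} {y : F}
    (h : ∀ v : T†.domain, ⟪(T† v : E), x⟫_𝕜 = ⟪(v : F), y⟫_𝕜) : (x, y) ∈ T.graph := by
  let e := (WithLp.prodContinuousLinearEquiv 2 𝕜 E F).symm
  let G : Submodule 𝕜 (WithLp 2 (E × F)) := T.graph.map (e : E × F →ₗ[𝕜] WithLp 2 (E × F))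
  have hG : _root_.IsClosed (G : Set (WithLp 2 (E × F))) :=
    e.toHomeomorph.isClosed_image.2 hTc
  have : CompleteSpace G := hG.completeSpace_coe
  suffices e (x, y) ∈ Gᗮᗮ by
    rw [Submodule.orthogonal_orthogonal] at this
    obtain ⟨p, hp, hpe⟩ := this
    rwa [e.injective hpe] at hp
  rw [Submodule.mem_orthogonal]
  intro z hz
  have hadj : ((-(WithLp.ofLp z).2, (WithLp.ofLp z).1) : F × E) ∈ T†.graph := by
    rw [adjoint_graph_eq_graph_adjoint hT, Submodule.mem_adjoint_iff]
    intro a b hab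
    have := (Submodule.mem_orthogonal _ _).1 hz (e (a, b)) (Submodule.mem_map_of_mem hab)
    simp only [e, WithLp.prodContinuousLinearEquiv_symm_apply, WithLp.prod_inner_apply] at this
    rw [inner_neg_right]
    linear_combination -this
  obtain ⟨v, hv₁, hv₂⟩ := (mem_graph_iff _).1 hadj
  have := h v
  simp only [hv₁, hv₂, inner_neg_left] at this
  simp only [e, WithLp.prodContinuousLinearEquiv_symm_apply, WithLp.prod_inner_apply]
  linear_combination this

theorem ker_eq_orthogonal_range_adjoint [CompleteSpace F] (hT : Dense (T.domain : Set E))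
    (hTc : T.IsClosed) : T.ker = (LinearMap.range T†.toFun)ᗮ := by
  ext x
  simp only [Submodule.mem_orthogonal, LinearMap.mem_range, forall_exists_index,
    forall_apply_eq_imp_iff]
  constructor
  · rintro hx v
    obtain ⟨hx, hTx⟩ := mem_ker_iff.1 hx
    exact (adjoint_isFormalAdjoint hT v ⟨x, hx⟩).trans (by rw [hTx, inner_zero_right])
  · intro hx
    show (x, 0) ∈ T.graph
    refine mem_graph_of_forall_inner_adjoint hT hTc fun v => ?_
    rw [inner_zero_right]
    exact hx v

theorem orthogonal_ker_eq_closure_range_adjoint [CompleteSpace F] (hT : Dense (T.domain : Set E))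
    (hTc : T.IsClosed) : T.kerᗮ = (LinearMap.range T†.toFun).topologicalClosure := by
  rw [ker_eq_orthogonal_range_adjoint hT hTc, Submodule.orthogonal_orthogonal_eq_closure]

theorem le_mul_norm_starProjection_ker_of_forall_le {G : Type*} [AddCommGroup G] [Module 𝕜 G]
    [TopologicalSpace G] [CompleteSpace F] [T.ker.HasOrthogonalProjection]
    (hT : Dense (T.domain : Set E)) (hTc : T.IsClosed) {S : F →ₗ.[𝕜] G} (hS : S.IsClosed)
    (hTS : ∀ x : T.domain, T x ∈ S.ker) {x : E} {c C : ℝ}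
    (h : ∀ (v : T†.domain) (hv : (v : F) ∈ S.domain), S ⟨v, hv⟩ = 0 → c ≤ C * ‖x + T† v‖) :
    c ≤ C * ‖T.ker.starProjection x‖ := by
  have := (isClosed_ker hS).completeSpace_coe
  refine Submodule.le_mul_norm_starProjection_of_forall_le
    (orthogonal_ker_eq_closure_range_adjoint hT hTc).le ?_
  rintro _ ⟨v, rfl⟩
  obtain ⟨hw, hTw⟩ := exists_adjoint_starProjection_eq hT S.ker hTS v
  obtain ⟨hw', hSw⟩ := mem_ker_iff.1 (S.ker.starProjection_apply_mem v)
  have := h ⟨_, hw⟩ hw' hSw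
  rwa [hTw] at this

theorem inner_adjoint_add_adjoint_eq_of_apply_eq_zero {G : Type*} [NormedAddCommGroup G]
    [InnerProductSpace 𝕜 G] [CompleteSpace G] (hT : Dense (T.domain : Set E)) (A : E →L[𝕜] G)
    (g : G) (v : T†.domain) {u : T.domain} (hu : T u = 0) :
    ⟪ContinuousLinearMap.adjoint A g + T† v, (u : E)⟫_𝕜 = ⟪g, A u⟫_𝕜 := by
  rw [inner_add_left, ContinuousLinearMap.adjoint_inner_left, adjoint_isFormalAdjoint hT, hu,
    inner_zero_right, add_zero]

end LinearPMap


theorem skoda_duality_lemma_general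
    {H H₀ H₁ H₂ : Type*}
    [NormedAddCommGroup H] [InnerProductSpace ℂ H] [CompleteSpace H]
    [NormedAddCommGroup H₀] [InnerProductSpace ℂ H₀] [CompleteSpace H₀]
    [NormedAddCommGroup H₁] [InnerProductSpace ℂ H₁] [CompleteSpace H₁]
    [NormedAddCommGroup H₂] [InnerProductSpace ℂ H₂]
    (T : H₀ →L[ℂ] H)
    (T₁ : H₀ →ₗ.[ℂ] H₁) (T₂ : H₁ →ₗ.[ℂ] H₂)
    (hT₁dense : Dense (T₁.domain : Set H₀)) (hT₁closed : T₁.IsClosed)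
    (hT₂closed : T₂.IsClosed)
    (hmap : ∀ u : T₁.domain, T₁ u ∈ T₂.domain)
    (hcomp : ∀ u : T₁.domain, T₂ ⟨T₁ u, hmap u⟩ = 0)
    (F : Submodule ℂ H)
    (hTF : ∀ u : T₁.domain, T₁ u = 0 → T (u : H₀) ∈ F)
    (f : H) (hf : f ∈ F) (C : ℝ) (hC : 0 < C) :
    (∃ u : T₁.domain, T₁ u = 0 ∧ T (u : H₀) = f ∧ ‖(u : H₀)‖ ≤ C) ↔
      (∀ g ∈ F, ∀ (v : H₁) (hv₁ : v ∈ T₁.adjoint.domain) (hv₂ : v ∈ T₂.domain),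
        ‖(inner ℂ g f : ℂ)‖ ^ 2 ≤
          C ^ 2 * (‖ContinuousLinearMap.adjoint T g + T₁.adjoint ⟨v, hv₁⟩‖ ^ 2 +
            ‖T₂ ⟨v, hv₂⟩‖ ^ 2)) := by
  constructor
  · rintro ⟨u, hu0, rfl, hu⟩ g - v hv₁ hv₂
    set a := ContinuousLinearMap.adjoint T g + T₁.adjoint ⟨v, hv₁⟩
    have hle : ‖⟪g, T u⟫_ℂ‖ ≤ C * ‖a‖ := by
      rw [← T₁.inner_adjoint_add_adjoint_eq_of_apply_eq_zero hT₁dense T g _ hu0, mul_comm C]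
      exact (norm_inner_le_norm _ _).trans (by gcongr)
    calc ‖⟪g, T u⟫_ℂ‖ ^ 2 ≤ C ^ 2 * ‖a‖ ^ 2 := by rw [← mul_pow]; gcongr
      _ ≤ _ := by gcongr; exact le_add_of_nonneg_right (by positivity)
  · intro h
    have := (T₁.isClosed_ker hT₁closed).completeSpace_coe
    have hbound : ∀ g ∈ F,
        ‖⟪f, g⟫_ℂ‖ ≤ C * ‖T₁.ker.starProjection (ContinuousLinearMap.adjoint T g)‖ :=
      fun g hg => T₁.le_mul_norm_starProjection_ker_of_forall_le hT₁dense hT₁closed hT₂closed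
        (fun x => LinearPMap.mem_ker_iff.2 ⟨hmap x, hcomp x⟩) fun v hv₂ hT₂v => by
          have := h g hg v v.2 hv₂
          rw [hT₂v, norm_zero, zero_pow two_ne_zero, add_zero, ← mul_pow, norm_inner_symm] at this
          exact (pow_le_pow_iff_left₀ (norm_nonneg _) (by positivity) two_ne_zero).1 this
    obtain ⟨u, huK, hu, hTu⟩ := T₁.ker.exists_mem_norm_le_inner_eq
      ((ContinuousLinearMap.adjoint T).toLinearMap ∘ₗ F.subtype) ((innerₛₗ ℂ f) ∘ₗ F.subtype)
      hC.le fun g => hbound g g.2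
    obtain ⟨hud, hu0⟩ := LinearPMap.mem_ker_iff.1 huK
    refine ⟨⟨u, hud⟩, hu0, F.eq_of_forall_inner_eq (hTF ⟨u, hud⟩ hu0) hf fun g hg => ?_, hu⟩
    simpa [ContinuousLinearMap.adjoint_inner_right] using hTu ⟨g, hg⟩

/-- Skoda's functional-analytic lemma.  Let `H, H₀, H₁, H₂` be complex
Hilbert spaces, `T : H₀ → H` a bounded linear operator, and `T₁ : H₀ ⇀ H₁`,
`T₂ : H₁ ⇀ H₂` closed densely defined operators with `T₂ ∘ T₁ = 0` on `Dom T₁`.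
Let `F ⊆ H` be a closed subspace with `T (Ker T₁) ⊆ F`, `f ∈ F` and `C > 0`.
Then `f = T u` for some `u ∈ Ker T₁` with `‖u‖ ≤ C` iff
`|⟪g, f⟫|² ≤ C² (‖T* g + T₁* v‖² + ‖T₂ v‖²)` for all `g ∈ F` and
`v ∈ Dom T₁* ∩ Dom T₂`. -/
theorem skoda_duality_lemma
    {H H₀ H₁ H₂ : Type*}
    [NormedAddCommGroup H] [InnerProductSpace ℂ H] [CompleteSpace H]
    [NormedAddCommGroup H₀] [InnerProductSpace ℂ H₀] [CompleteSpace H₀]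
    [NormedAddCommGroup H₁] [InnerProductSpace ℂ H₁] [CompleteSpace H₁]
    [NormedAddCommGroup H₂] [InnerProductSpace ℂ H₂] [CompleteSpace H₂]
    (T : H₀ →L[ℂ] H)
    (T₁ : H₀ →ₗ.[ℂ] H₁) (T₂ : H₁ →ₗ.[ℂ] H₂)
    (hT₁dense : Dense (T₁.domain : Set H₀)) (hT₁closed : T₁.IsClosed)
    (hT₂dense : Dense (T₂.domain : Set H₁)) (hT₂closed : T₂.IsClosed)
    (hmap : ∀ u : T₁.domain, T₁ u ∈ T₂.domain)
    (hcomp : ∀ u : T₁.domain, T₂ ⟨T₁ u, hmap u⟩ = 0)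
    (F : Submodule ℂ H) (hF : IsClosed (F : Set H))
    (hTF : ∀ u : T₁.domain, T₁ u = 0 → T (u : H₀) ∈ F)
    (f : H) (hf : f ∈ F) (C : ℝ) (hC : 0 < C) :
    (∃ u : T₁.domain, T₁ u = 0 ∧ T (u : H₀) = f ∧ ‖(u : H₀)‖ ≤ C) ↔
      (∀ g ∈ F, ∀ (v : H₁) (hv₁ : v ∈ T₁.adjoint.domain) (hv₂ : v ∈ T₂.domain),
        ‖(inner ℂ g f : ℂ)‖ ^ 2 ≤
          C ^ 2 * (‖ContinuousLinearMap.adjoint T g + T₁.adjoint ⟨v, hv₁⟩‖ ^ 2 +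
            ‖T₂ ⟨v, hv₂⟩‖ ^ 2)) :=
  skoda_duality_lemma_general T T₁ T₂ hT₁dense hT₁closed hT₂closed hmap hcomp F hTF f hf C hC
end
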